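/- arXiv:0812.2778 — 2 statements merged into one kernel-verified Lean document; each statement's English description precedes it below -/
import Mathlib

section
/- Let n ≥ 1, let u : ℝⁿ → ℝ be smooth with compact support contained in ℝⁿ \ {0}, and let ψ : ℝⁿ \ {0} → ℝ be a positive twice continuously differentiable function. Then ∫_{ℝⁿ} ψ(x)² |∇u(x)|² dx = ∫_{ℝⁿ} ( |∇(uψ)(x)|² + Δψ(x) ψ(x) u(x)² ) dx, where Δψ = Σ_{i=1}^n ∂²ψ/∂x_i². -/
open MeasureTheory

/-- The Laplacian `Δψ = ∑ i ∂²ψ/∂x_i²` of a scalar function. -/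
noncomputable def scalarLaplacian {n : ℕ} (ψ : EuclideanSpace ℝ (Fin n) → ℝ)
    (x : EuclideanSpace ℝ (Fin n)) : ℝ :=
  ∑ i : Fin n,
    fderiv ℝ (fun y => fderiv ℝ ψ y (EuclideanSpace.single i 1)) x
      (EuclideanSpace.single i 1)

variable {n : ℕ}

lemma norm_grad_sq (f : EuclideanSpace ℝ (Fin n) → ℝ) (x : EuclideanSpace ℝ (Fin n)) :
    ‖gradient f x‖ ^ 2 = ∑ i : Fin n, (fderiv ℝ f x (EuclideanSpace.single i 1)) ^ 2 := by
  have h : ∀ v : EuclideanSpace ℝ (Fin n),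
      inner ℝ (gradient f x) v = fderiv ℝ f x v := fun v =>
    InnerProductSpace.toDual_symm_apply
  have h2 : ∀ i, gradient f x i = fderiv ℝ f x (EuclideanSpace.single i 1) := by
    intro i
    rw [← h, EuclideanSpace.inner_single_right]
    simp [RCLike.inner_apply]
  rw [EuclideanSpace.norm_eq, Real.sq_sqrt (by positivity)]
  congr 1; ext i; rw [h2 i]; simp [sq_abs]

lemma ibp_aux (Ψ g : EuclideanSpace ℝ (Fin n) → ℝ)
    (hΨ : ContDiff ℝ 2 Ψ) (hΨc : HasCompactSupport Ψ)
    (hg : ContDiff ℝ 2 g) (hgc : HasCompactSupport g) (v : EuclideanSpace ℝ (Fin n)) :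
    ∫ x, fderiv ℝ (fun y => fderiv ℝ Ψ y v) x v * g x
      = -∫ x, fderiv ℝ g x v * fderiv ℝ Ψ x v := by
  have hf1 : ContDiff ℝ 1 (fun y => fderiv ℝ Ψ y v) :=
    (ContinuousLinearMap.apply ℝ ℝ v).contDiff.comp (hΨ.fderiv_right (le_refl 2))
  have hfc : HasCompactSupport (fun y => fderiv ℝ Ψ y v) :=
    (hΨc.fderiv ℝ).comp_left (g := fun L : (EuclideanSpace ℝ (Fin n)) →L[ℝ] ℝ => L v) (by simp)
  obtain ⟨C, hC⟩ := ContDiff.lipschitzWith_of_hasCompactSupport hfc hf1 one_ne_zero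
  obtain ⟨D, hD⟩ := ContDiff.lipschitzWith_of_hasCompactSupport hgc hg (by norm_num)
  have key := LipschitzWith.integral_lineDeriv_mul_eq (μ := volume) hC hD hgc v
  have e1 : ∀ x, lineDeriv ℝ (fun y => fderiv ℝ Ψ y v) x v
      = fderiv ℝ (fun y => fderiv ℝ Ψ y v) x v := fun x =>
    ((hf1.differentiable one_ne_zero) x).lineDeriv_eq_fderiv
  have e2 : ∀ x, lineDeriv ℝ g x (-v) = -(fderiv ℝ g x v) := fun x => by
    rw [((hg.differentiable (by norm_num)) x).lineDeriv_eq_fderiv]; simp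
  simp only [e1, e2] at key
  rw [key, ← integral_neg]
  congr 1; funext x; ring

lemma key_identity (u Ψ : EuclideanSpace ℝ (Fin n) → ℝ)
    (hu : ContDiff ℝ 2 u) (hcs : HasCompactSupport u)
    (hΨ : ContDiff ℝ 2 Ψ) (hΨc : HasCompactSupport Ψ) :
    ∫ x, Ψ x ^ 2 * ‖gradient u x‖ ^ 2 =
      ∫ x, (‖gradient (fun y => u y * Ψ y) x‖ ^ 2 + scalarLaplacian Ψ x * Ψ x * u x ^ 2) := by
  have hdu : Differentiable ℝ u := hu.differentiable two_ne_zero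
  have hdΨ : Differentiable ℝ Ψ := hΨ.differentiable two_ne_zero
  set e : Fin n → EuclideanSpace ℝ (Fin n) := fun i => EuclideanSpace.single i 1 with he
  have hg : ContDiff ℝ 2 (fun y => Ψ y * (u y * u y)) := hΨ.mul (hu.mul hu)
  have hgc : HasCompactSupport (fun y => Ψ y * (u y * u y)) := hΨc.mul_right
  -- product rules
  have hPmul : ∀ x v, fderiv ℝ (fun y => u y * Ψ y) x v
      = u x * fderiv ℝ Ψ x v + Ψ x * fderiv ℝ u x v := by
    intro x v
    rw [fderiv_fun_mul (hdu x) (hdΨ x)]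
    simp only [ContinuousLinearMap.add_apply, ContinuousLinearMap.smul_apply, smul_eq_mul]
  have hGmul : ∀ x v, fderiv ℝ (fun y => Ψ y * (u y * u y)) x v
      = u x * u x * fderiv ℝ Ψ x v + 2 * u x * Ψ x * fderiv ℝ u x v := by
    intro x v
    rw [fderiv_fun_mul (hdΨ x) ((hdu x).fun_mul (hdu x)), fderiv_fun_mul (hdu x) (hdu x)]
    simp only [ContinuousLinearMap.add_apply, ContinuousLinearMap.smul_apply, smul_eq_mul]
    ring
  -- continuity
  have hca : ∀ i, Continuous (fun x => fderiv ℝ Ψ x (e i)) := fun i =>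
    (hΨ.continuous_fderiv two_ne_zero).clm_apply continuous_const
  have hcb : ∀ i, Continuous (fun x => fderiv ℝ u x (e i)) := fun i =>
    (hu.continuous_fderiv two_ne_zero).clm_apply continuous_const
  have hf1 : ∀ i, ContDiff ℝ 1 (fun y => fderiv ℝ Ψ y (e i)) := fun i =>
    (ContinuousLinearMap.apply ℝ ℝ (e i)).contDiff.comp (hΨ.fderiv_right (le_refl 2))
  have hcL : ∀ i, Continuous
      (fun x => fderiv ℝ (fun y => fderiv ℝ Ψ y (e i)) x (e i)) := fun i =>
    ((hf1 i).continuous_fderiv one_ne_zero).clm_apply continuous_const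
  -- integrability helper
  have hKc : IsCompact (tsupport u ∪ tsupport Ψ) := hcs.union hΨc
  have hint : ∀ f : EuclideanSpace ℝ (Fin n) → ℝ, Continuous f →
      (∀ x, u x = 0 → Ψ x = 0 → f x = 0) → Integrable f := by
    intro f hc hf
    apply hc.integrable_of_hasCompactSupport
    apply HasCompactSupport.intro hKc
    intro x hx
    rw [Set.mem_union] at hx
    push_neg at hx
    exact hf x (image_eq_zero_of_notMem_tsupport hx.1) (image_eq_zero_of_notMem_tsupport hx.2)
  -- rewrite the two integrands as sums
  have hnorm1 : (fun x => Ψ x ^ 2 * ‖gradient u x‖ ^ 2)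
      = fun x => ∑ i : Fin n, (Ψ x * fderiv ℝ u x (e i)) ^ 2 := by
    funext x
    rw [norm_grad_sq, Finset.mul_sum]
    exact Finset.sum_congr rfl fun i _ => by ring
  have hnorm2 : (fun x => ‖gradient (fun y => u y * Ψ y) x‖ ^ 2
        + scalarLaplacian Ψ x * Ψ x * u x ^ 2)
      = fun x => ∑ i : Fin n,
          ((u x * fderiv ℝ Ψ x (e i) + Ψ x * fderiv ℝ u x (e i)) ^ 2
            + fderiv ℝ (fun y => fderiv ℝ Ψ y (e i)) x (e i) * (Ψ x * (u x * u x))) := by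
    funext x
    rw [norm_grad_sq, scalarLaplacian, Finset.sum_mul, Finset.sum_mul, ← Finset.sum_add_distrib]
    refine Finset.sum_congr rfl fun i _ => ?_
    rw [hPmul x (e i)]
    ring
  rw [hnorm1, hnorm2]
  -- integrability of each summand
  have int1 : ∀ i : Fin n, Integrable (fun x => (Ψ x * fderiv ℝ u x (e i)) ^ 2) := fun i =>
    hint _ (((hΨ.continuous).mul (hcb i)).pow 2) (fun x _ h2 => by simp [h2])
  have int_sq : ∀ i : Fin n, Integrable
      (fun x => (u x * fderiv ℝ Ψ x (e i) + Ψ x * fderiv ℝ u x (e i)) ^ 2) := fun i =>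
    hint _ ((((hu.continuous).mul (hca i)).add ((hΨ.continuous).mul (hcb i))).pow 2)
      (fun x h1 h2 => by simp [h1, h2])
  have int_Lg : ∀ i : Fin n, Integrable
      (fun x => fderiv ℝ (fun y => fderiv ℝ Ψ y (e i)) x (e i) * (Ψ x * (u x * u x))) := fun i =>
    hint _ ((hcL i).mul ((hΨ.continuous).mul ((hu.continuous).mul (hu.continuous))))
      (fun x _ h2 => by simp [h2])
  have int_B : ∀ i : Fin n, Integrable
      (fun x => (u x * u x * fderiv ℝ Ψ x (e i)
        + 2 * u x * Ψ x * fderiv ℝ u x (e i)) * fderiv ℝ Ψ x (e i)) := fun i =>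
    hint _ (((((hu.continuous).mul (hu.continuous)).mul (hca i)).add
      ((((continuous_const.mul (hu.continuous))).mul (hΨ.continuous)).mul (hcb i))).mul (hca i))
      (fun x h1 h2 => by simp [h1, h2])
  rw [integral_finset_sum (f := fun (i : Fin n) x => (Ψ x * fderiv ℝ u x (e i)) ^ 2)
      _ (fun i _ => int1 i),
    integral_finset_sum (f := fun (i : Fin n) x =>
        ((u x * fderiv ℝ Ψ x (e i) + Ψ x * fderiv ℝ u x (e i)) ^ 2
          + fderiv ℝ (fun y => fderiv ℝ Ψ y (e i)) x (e i) * (Ψ x * (u x * u x))))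
      _ (fun i _ => (int_sq i).add (int_Lg i))]
  refine Finset.sum_congr rfl fun i _ => ?_
  rw [integral_add (int_sq i) (int_Lg i)]
  have h1 : ∫ x, fderiv ℝ (fun y => fderiv ℝ Ψ y (e i)) x (e i) * (Ψ x * (u x * u x))
      = -∫ x, fderiv ℝ (fun y => Ψ y * (u y * u y)) x (e i) * fderiv ℝ Ψ x (e i) :=
    ibp_aux Ψ (fun y => Ψ y * (u y * u y)) hΨ hΨc hg hgc (e i)
  have h2 : (fun x => fderiv ℝ (fun y => Ψ y * (u y * u y)) x (e i) * fderiv ℝ Ψ x (e i))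
      = fun x => (u x * u x * fderiv ℝ Ψ x (e i)
        + 2 * u x * Ψ x * fderiv ℝ u x (e i)) * fderiv ℝ Ψ x (e i) := by
    funext x; rw [hGmul x (e i)]
  rw [h1, h2, ← sub_eq_add_neg, ← integral_sub (int_sq i) (int_B i)]
  congr 1; funext x; ring

theorem ground_state_substitution_identity {n : ℕ} (hn : 1 ≤ n)
    (u : EuclideanSpace ℝ (Fin n) → ℝ)
    (hu : ContDiff ℝ (⊤ : ℕ∞) u) (hcs : HasCompactSupport u)
    (h0 : (0 : EuclideanSpace ℝ (Fin n)) ∉ tsupport u)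
    (ψ : EuclideanSpace ℝ (Fin n) → ℝ)
    (hψpos : ∀ x : EuclideanSpace ℝ (Fin n), x ≠ 0 → 0 < ψ x)
    (hψ : ContDiffOn ℝ 2 ψ {x | x ≠ 0}) :
    ∫ x : EuclideanSpace ℝ (Fin n), ψ x ^ 2 * ‖gradient u x‖ ^ 2 =
      ∫ x : EuclideanSpace ℝ (Fin n),
        (‖gradient (fun y => u y * ψ y) x‖ ^ 2 + scalarLaplacian ψ x * ψ x * (u x) ^ 2) := by
  classical
  have hK : IsCompact (tsupport u) := hcs
  have hKU : tsupport u ⊆ {x : EuclideanSpace ℝ (Fin n) | x ≠ 0} := fun x hx hx0 =>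
    h0 (hx0 ▸ hx)
  obtain ⟨δ, hδpos, hδ⟩ := hK.exists_cthickening_subset_open isOpen_ne hKU
  have hsub : tsupport u ⊆ interior (Metric.cthickening δ (tsupport u)) :=
    (Metric.self_subset_thickening hδpos _).trans
      (interior_maximal (Metric.thickening_subset_cthickening _ _) Metric.isOpen_thickening)
  obtain ⟨f, hf1, hf0, -⟩ :=
    exists_contMDiffMap_one_nhds_of_subset_interior (modelWithCornersSelf ℝ (EuclideanSpace ℝ (Fin n)))
      (n := (⊤ : ℕ∞))
      (isClosed_tsupport u) hsub
  set χ : EuclideanSpace ℝ (Fin n) → ℝ := ⇑f with hχdef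
  have hχsm : ContDiff ℝ 2 χ := (contMDiff_iff_contDiff.mp f.contMDiff).of_le (by
      rw [show ((2 : WithTop ℕ∞)) = ((2 : ℕ∞) : WithTop ℕ∞) from rfl]
      exact WithTop.coe_le_coe.mpr le_top)
  have hχc : HasCompactSupport χ := HasCompactSupport.intro hK.cthickening hf0
  have hχsupp : tsupport χ ⊆ Metric.cthickening δ (tsupport u) := by
    apply closure_minimal _ Metric.isClosed_cthickening
    intro x hx
    by_contra hxc
    exact hx (hf0 x hxc)
  have hχ0 : (0 : EuclideanSpace ℝ (Fin n)) ∉ tsupport χ := fun h => (hδ (hχsupp h)) rfl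
  obtain ⟨W, hWopen, hKW, hχ1⟩ := eventually_nhdsSet_iff_exists.mp hf1
  set Ψ : EuclideanSpace ℝ (Fin n) → ℝ := fun x => χ x * ψ x with hΨdef
  have hΨ2 : ContDiff ℝ 2 Ψ := by
    rw [contDiff_iff_contDiffAt]
    intro x
    by_cases hx : x = 0
    · subst hx
      have hev : Ψ =ᶠ[nhds 0] (fun _ => (0 : ℝ)) := by
        filter_upwards [(isClosed_tsupport χ).isOpen_compl.mem_nhds hχ0] with y hy
        simp [hΨdef, image_eq_zero_of_notMem_tsupport hy]
      exact (contDiffAt_const (c := (0 : ℝ))).congr_of_eventuallyEq hev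
    · exact (hχsm.contDiffAt).mul (hψ.contDiffAt (isOpen_ne.mem_nhds hx))
  have hΨc : HasCompactSupport Ψ := hχc.mul_right
  have hΨψ : ∀ x ∈ W, Ψ x = ψ x := fun x hx => by
    rw [hΨdef]; simp only []; rw [hχ1 x hx, one_mul]
  have eq1 : (fun x => ψ x ^ 2 * ‖gradient u x‖ ^ 2)
      = fun x => Ψ x ^ 2 * ‖gradient u x‖ ^ 2 := by
    funext x
    by_cases hx : x ∈ W
    · rw [hΨψ x hx]
    · have hxK : x ∉ tsupport u := fun h => hx (hKW h)
      have hev : u =ᶠ[nhds x] (fun _ => (0 : ℝ)) := by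
        filter_upwards [(isClosed_tsupport u).isOpen_compl.mem_nhds hxK] with y hy
        exact image_eq_zero_of_notMem_tsupport hy
      have hgrad : gradient u x = 0 := by
        rw [hev.gradient_eq]; exact gradient_const _ _
      rw [hgrad]; simp
  have eq2 : (fun x => ‖gradient (fun y => u y * ψ y) x‖ ^ 2
        + scalarLaplacian ψ x * ψ x * u x ^ 2)
      = fun x => ‖gradient (fun y => u y * Ψ y) x‖ ^ 2
        + scalarLaplacian Ψ x * Ψ x * u x ^ 2 := by
    funext x
    have hgrad : gradient (fun y => u y * ψ y) x = gradient (fun y => u y * Ψ y) x := by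
      by_cases hx : x ∈ W
      · have hev : (fun y => u y * ψ y) =ᶠ[nhds x] (fun y => u y * Ψ y) := by
          filter_upwards [hWopen.mem_nhds hx] with y hy
          rw [hΨψ y hy]
        exact hev.gradient_eq
      · have hxK : x ∉ tsupport u := fun h => hx (hKW h)
        have hev : (fun y => u y * ψ y) =ᶠ[nhds x] (fun y => u y * Ψ y) := by
          filter_upwards [(isClosed_tsupport u).isOpen_compl.mem_nhds hxK] with y hy
          rw [image_eq_zero_of_notMem_tsupport hy, zero_mul, zero_mul]
        exact hev.gradient_eq
    rw [hgrad]
    by_cases hu0 : u x = 0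
    · simp [hu0]
    · have hxW : x ∈ W := hKW (subset_closure (Function.mem_support.mpr hu0))
      have hev : ψ =ᶠ[nhds x] Ψ := by
        filter_upwards [hWopen.mem_nhds hxW] with y hy
        exact (hΨψ y hy).symm
      have hlap : scalarLaplacian ψ x = scalarLaplacian Ψ x := by
        unfold scalarLaplacian
        refine Finset.sum_congr rfl fun i _ => ?_
        have hd : (fun y => fderiv ℝ ψ y (EuclideanSpace.single i 1))
            =ᶠ[nhds x] (fun y => fderiv ℝ Ψ y (EuclideanSpace.single i 1)) := by
          filter_upwards [hWopen.mem_nhds hxW] with y hy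
          have hyy : ψ =ᶠ[nhds y] Ψ := by
            filter_upwards [hWopen.mem_nhds hy] with z hz
            exact (hΨψ z hz).symm
          rw [hyy.fderiv_eq]
        rw [hd.fderiv_eq]
      rw [hlap, hev.eq_of_nhds]
  rw [eq1, eq2]
  exact key_identity u Ψ (hu.of_le (by rw [show ((2 : WithTop ℕ∞)) = ((2 : ℕ∞) : WithTop ℕ∞) from rfl]; exact WithTop.coe_le_coe.mpr le_top)) hcs hΨ2 hΨc
end

section
/- (One-dimensional weighted Hardy inequality on the half-line) Let a ∈ ℝ. Then for every smooth function c : ℝ → ℝ with compact support contained in (0, ∞), ∫_0^∞ r^a |c'(r)|² dr ≥ ((a − 1)/2)² ∫_0^∞ r^{a−2} |c(r)|² dr. -/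
set_option maxHeartbeats 1000000

open MeasureTheory

theorem one_dim_weighted_hardy (a : ℝ) (c : ℝ → ℝ)
    (hc : ContDiff ℝ (⊤ : ℕ∞) c) (hcs : HasCompactSupport c)
    (hsupp : tsupport c ⊆ Set.Ioi (0 : ℝ)) :
    ∫ r in Set.Ioi (0 : ℝ), r ^ a * (deriv c r) ^ 2 ≥
      ((a - 1) / 2) ^ 2 * ∫ r in Set.Ioi (0 : ℝ), r ^ (a - 2) * (c r) ^ 2 := by
  rcases (tsupport c).eq_empty_or_nonempty with hK | hK
  · have hc0 : ∀ x, c x = 0 := fun x =>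
      image_eq_zero_of_notMem_tsupport (by simp [hK])
    have hd0 : ∀ x, deriv c x = 0 := by
      intro x
      by_contra h
      have : x ∈ tsupport c := support_deriv_subset (f := c) h
      simp [hK] at this
    simp [hc0, hd0]
  · have hcont : Continuous c := hc.continuous
    have hcd : Continuous (deriv c) := hc.continuous_deriv (by simp)
    set K := tsupport c with hKdef
    have hKc : IsCompact K := hcs
    have hεK : sInf K ∈ K := hKc.sInf_mem hK
    have hMK : sSup K ∈ K := hKc.sSup_mem hK
    have hε : (0 : ℝ) < sInf K := hsupp hεK
    set A : ℝ := sInf K / 2 with hAdef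
    set B : ℝ := sSup K + 1 with hBdef
    have hA : 0 < A := by positivity
    have hεM : sInf K ≤ sSup K := csInf_le hKc.bddBelow hMK
    have hAB : A ≤ B := by
      simp only [hAdef, hBdef]; linarith
    have hKsub : K ⊆ Set.Ioc A B := by
      intro x hx
      constructor
      · have := csInf_le hKc.bddBelow hx
        simp only [hAdef]; linarith
      · have := le_csSup hKc.bddAbove hx
        simp only [hBdef]; linarith
    have hcz : ∀ x, x ∉ Set.Ioc A B → c x = 0 := fun x hx =>
      image_eq_zero_of_notMem_tsupport (fun h => hx (hKsub h))
    have hdz : ∀ x, x ∉ Set.Ioc A B → deriv c x = 0 := by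
      intro x hx
      by_contra h
      exact hx (hKsub (support_deriv_subset (f := c) h))
    have hcA : c A = 0 := hcz A (by simp)
    have hcB : c B = 0 := by
      apply image_eq_zero_of_notMem_tsupport
      intro h
      have := le_csSup hKc.bddAbove h
      simp only [hBdef] at this
      linarith
    -- reduce integrals over Ioi 0 to interval integrals over [A, B]
    have hred : ∀ f : ℝ → ℝ, (∀ x, x ∉ Set.Ioc A B → f x = 0) →
        ∫ r in Set.Ioi (0 : ℝ), f r = ∫ r in A..B, f r := by
      intro f hf
      rw [intervalIntegral.integral_of_le hAB,
        ← setIntegral_eq_of_subset_of_forall_diff_eq_zero measurableSet_Ioi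
          (fun x hx => lt_trans hA hx.1) (fun x hx => hf x hx.2)]
    -- continuity helpers
    have hrpow : ∀ p : ℝ, ContinuousOn (fun r : ℝ => r ^ p) (Set.uIcc A B) := by
      intro p x hx
      rw [Set.uIcc_of_le hAB] at hx
      exact (Real.continuousAt_rpow_const x p
        (Or.inl (ne_of_gt (lt_of_lt_of_le hA hx.1)))).continuousWithinAt
    have hint1 : IntervalIntegrable (fun r => r ^ a * (deriv c r) ^ 2) volume A B :=
      (((hrpow a).mul ((hcd.pow 2).continuousOn))).intervalIntegrable
    have hint2 : IntervalIntegrable (fun r => r ^ (a - 2) * (c r) ^ 2) volume A B :=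
      (((hrpow (a - 2)).mul ((hcont.pow 2).continuousOn))).intervalIntegrable
    have hint3 : IntervalIntegrable (fun r => r ^ (a - 1) * (c r * deriv c r)) volume A B :=
      (((hrpow (a - 1)).mul ((hcont.mul hcd).continuousOn))).intervalIntegrable
    -- integration by parts: derivative of r ^ (a-1) * c r ^ 2
    have hIBP : (∫ r in A..B,
        ((a - 1) * r ^ (a - 2) * (c r) ^ 2 + r ^ (a - 1) * (2 * c r * deriv c r))) = 0 := by
      have hderiv : ∀ r ∈ Set.uIcc A B,
          HasDerivAt (fun x : ℝ => x ^ (a - 1) * (c x) ^ 2)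
            ((a - 1) * r ^ (a - 2) * (c r) ^ 2 + r ^ (a - 1) * (2 * c r * deriv c r)) r := by
        intro r hr
        rw [Set.uIcc_of_le hAB] at hr
        have hr0 : r ≠ 0 := ne_of_gt (lt_of_lt_of_le hA hr.1)
        have h1 : HasDerivAt (fun x : ℝ => x ^ (a - 1)) ((a - 1) * r ^ (a - 1 - 1)) r :=
          Real.hasDerivAt_rpow_const (Or.inl hr0)
        have h2 : HasDerivAt (fun x => (c x) ^ 2) (2 * c r * deriv c r) r := by
          have := ((hc.differentiable (by simp) r).hasDerivAt).pow 2
          exact this.congr_deriv (by norm_num)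
        have := h1.mul h2
        have hexp : a - 1 - 1 = a - 2 := by ring
        rw [hexp] at this
        exact this
      have hintF : IntervalIntegrable (fun r =>
          (a - 1) * r ^ (a - 2) * (c r) ^ 2 + r ^ (a - 1) * (2 * c r * deriv c r)) volume A B := by
        apply IntervalIntegrable.add
        · exact ((continuousOn_const.mul (hrpow (a - 2))).mul
            (hcont.pow 2).continuousOn).intervalIntegrable
        · exact ((hrpow (a - 1)).mul
            ((continuous_const.mul hcont).mul hcd).continuousOn).intervalIntegrable
      rw [intervalIntegral.integral_eq_sub_of_hasDerivAt hderiv hintF]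
      simp [hcA, hcB]
    -- rpow arithmetic
    have hsq : ∀ r : ℝ, 0 < r →
        (r ^ (a / 2)) ^ 2 = r ^ a ∧ r ^ (a / 2) * r ^ ((a - 2) / 2) = r ^ (a - 1) ∧
        (r ^ ((a - 2) / 2)) ^ 2 = r ^ (a - 2) := by
      intro r hr
      refine ⟨?_, ?_, ?_⟩
      · rw [sq, ← Real.rpow_add hr]; norm_num
      · rw [← Real.rpow_add hr]; ring_nf
      · rw [sq, ← Real.rpow_add hr]; ring_nf
    set l : ℝ := (a - 1) / 2 with hl
    -- nonnegativity of the square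
    have hnn : 0 ≤ ∫ r in A..B,
        (r ^ (a / 2) * deriv c r + l * r ^ ((a - 2) / 2) * c r) ^ 2 :=
      intervalIntegral.integral_nonneg hAB (fun u _ => sq_nonneg _)
    -- expand the square
    have hexpand : (∫ r in A..B,
        (r ^ (a / 2) * deriv c r + l * r ^ ((a - 2) / 2) * c r) ^ 2) =
        (∫ r in A..B, r ^ a * (deriv c r) ^ 2) +
        ((2 * l) * ∫ r in A..B, r ^ (a - 1) * (c r * deriv c r)) +
        (l ^ 2 * ∫ r in A..B, r ^ (a - 2) * (c r) ^ 2) := by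
      rw [← intervalIntegral.integral_const_mul, ← intervalIntegral.integral_const_mul,
        ← intervalIntegral.integral_add hint1 (hint3.const_mul _),
        ← intervalIntegral.integral_add (hint1.add (hint3.const_mul _)) (hint2.const_mul _)]
      apply intervalIntegral.integral_congr
      intro r hr
      rw [Set.uIcc_of_le hAB] at hr
      have hr0 : 0 < r := lt_of_lt_of_le hA hr.1
      obtain ⟨e1, e2, e3⟩ := hsq r hr0
      have : (r ^ (a / 2) * deriv c r + l * r ^ ((a - 2) / 2) * c r) ^ 2 =
          (r ^ (a / 2)) ^ 2 * (deriv c r) ^ 2 +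
          2 * l * (r ^ (a / 2) * r ^ ((a - 2) / 2) * (c r * deriv c r)) +
          l ^ 2 * ((r ^ ((a - 2) / 2)) ^ 2 * (c r) ^ 2) := by ring
      dsimp only
      rw [this, e1, e2, e3]
    -- split the IBP identity
    have hIBP2 : (a - 1) * (∫ r in A..B, r ^ (a - 2) * (c r) ^ 2) +
        2 * (∫ r in A..B, r ^ (a - 1) * (c r * deriv c r)) = 0 := by
      rw [← intervalIntegral.integral_const_mul, ← intervalIntegral.integral_const_mul,
        ← intervalIntegral.integral_add (hint2.const_mul _) (hint3.const_mul _), ← hIBP]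
      apply intervalIntegral.integral_congr
      intro r _
      ring
    rw [hred _ (fun x hx => by rw [hdz x hx]; ring),
      hred _ (fun x hx => by rw [hcz x hx]; ring)]
    set I1 := ∫ r in A..B, r ^ a * (deriv c r) ^ 2
    set I2 := ∫ r in A..B, r ^ (a - 2) * (c r) ^ 2
    set J := ∫ r in A..B, r ^ (a - 1) * (c r * deriv c r)
    have hJ : J = -l * I2 := by rw [hl]; linarith
    rw [hexpand, hJ] at hnn
    have : ((a - 1) / 2) ^ 2 = l ^ 2 := by rw [hl]
    rw [this]
    nlinarith [hnn]
end
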